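/- arXiv:2410.14362 — 4 statements merged into one kernel-verified Lean document; each statement's English description precedes it below -/
import Mathlib

section
/- Let α ∈ (1/2, 1), let x ∈ ℝ, and set ζ = (α − 1)(exp(x) + exp(−x)) and z₂ = (ζ − sqrt(ζ² − 4(1 − 2α))) / (2(1 − 2α)). Then z₂ > 0, and for every a > 0 the following are equivalent: (i) 1 − α/(exp(x − a) + 1) ≥ α/(exp(−x − a) + 1); (ii) (1 − 2α)·exp(2a) + (1 − α)(exp(x) + exp(−x))·exp(a) + 1 ≥ 0; (iii) exp(a) ≤ z₂. -/
/-!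
Clearing the denominators of the two thresholds (using `exp x * exp (-x) = 1`) turns the peace
condition into nonnegativity of the concave quadratic `(1 - 2α) z² + (1 - α)(eˣ + e⁻ˣ) z + 1` in
`z = exp a`. Its roots have opposite signs, so on `z > 0` it is nonnegative exactly up to the
positive root, which is `z₂`.
-/

open Real

lemma quadratic_eq_mul_sub_roots {m c s : ℝ} (hm : m ≠ 0) (hs : s ^ 2 = c ^ 2 - 4 * m) (z : ℝ) :
    m * z ^ 2 - c * z + 1 = m * (z - (c - s) / (2 * m)) * (z - (c + s) / (2 * m)) := by
  field_simp
  linear_combination hs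

lemma abs_lt_sqrt_sq_sub {m : ℝ} (hm : m < 0) (c : ℝ) : |c| < √(c ^ 2 - 4 * m) :=
  (Real.lt_sqrt (abs_nonneg c)).2 (by rw [sq_abs]; linarith)

lemma quadratic_root_pos {m : ℝ} (hm : m < 0) (c : ℝ) : 0 < (c - √(c ^ 2 - 4 * m)) / (2 * m) :=
  div_pos_of_neg_of_neg (by linarith [le_abs_self c, abs_lt_sqrt_sq_sub hm c]) (by linarith)

lemma quadratic_nonneg_iff_le_root {m c z : ℝ} (hm : m < 0) (hz : 0 ≤ z) :
    0 ≤ m * z ^ 2 - c * z + 1 ↔ z ≤ (c - √(c ^ 2 - 4 * m)) / (2 * m) := by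
  set s := √(c ^ 2 - 4 * m)
  have hs : s ^ 2 = c ^ 2 - 4 * m := Real.sq_sqrt (by nlinarith)
  have hneg_root : (c + s) / (2 * m) < 0 :=
    div_neg_of_pos_of_neg (by linarith [neg_abs_le c, abs_lt_sqrt_sq_sub hm c]) (by linarith)
  have hfactor : m * (z - (c + s) / (2 * m)) < 0 := mul_neg_of_neg_of_pos hm (by linarith)
  rw [quadratic_eq_mul_sub_roots hm.ne hs, mul_right_comm, ← neg_mul_neg,
    mul_nonneg_iff_of_pos_left (neg_pos.2 hfactor), neg_nonneg, sub_nonpos]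

lemma peace_iff_quadratic_nonneg {α u v E : ℝ} (hu : 0 < u) (hv : 0 < v) (huv : u * v = 1)
    (hE : 0 < E) :
    α / (v / E + 1) ≤ 1 - α / (u / E + 1) ↔
      0 ≤ (1 - 2 * α) * E ^ 2 + (1 - α) * (u + v) * E + 1 := by
  rw [div_add_one hE.ne', div_add_one hE.ne', div_div_eq_mul_div, div_div_eq_mul_div,
    le_sub_iff_add_le, div_add_div _ _ (by positivity) (by positivity), div_le_one (by positivity)]
  constructor <;> intro h <;> linarith

theorem peace_threshold_equivalences (α x : ℝ) (hα : α ∈ Set.Ioo (1/2 : ℝ) 1) :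
    (((α - 1) * (Real.exp x + Real.exp (-x)) -
        Real.sqrt (((α - 1) * (Real.exp x + Real.exp (-x)))^2 - 4 * (1 - 2*α))) /
        (2 * (1 - 2*α)) > 0) ∧
    ∀ a : ℝ, a > 0 →
      ((1 - α / (Real.exp (x - a) + 1) ≥ α / (Real.exp (-x - a) + 1) ↔
        (1 - 2*α) * Real.exp (2*a) + (1 - α) * (Real.exp x + Real.exp (-x)) * Real.exp a + 1 ≥ 0) ∧
      ((1 - 2*α) * Real.exp (2*a) + (1 - α) * (Real.exp x + Real.exp (-x)) * Real.exp a + 1 ≥ 0 ↔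
        Real.exp a ≤ ((α - 1) * (Real.exp x + Real.exp (-x)) -
          Real.sqrt (((α - 1) * (Real.exp x + Real.exp (-x)))^2 - 4 * (1 - 2*α))) /
          (2 * (1 - 2*α)))) := by
  have hm : 1 - 2 * α < 0 := by linarith [hα.1]
  have hexp_two_mul (a : ℝ) : exp (2 * a) = exp a ^ 2 := by rw [two_mul, exp_add, sq]
  refine ⟨quadratic_root_pos hm _, fun a _ => ⟨?_, ?_⟩⟩
  · rw [ge_iff_le, ge_iff_le, exp_sub, exp_sub, hexp_two_mul,
      peace_iff_quadratic_nonneg (exp_pos x) (exp_pos (-x)) (by rw [← exp_add, add_neg_cancel,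
        exp_zero]) (exp_pos a)]
  · rw [ge_iff_le, ← quadratic_nonneg_iff_le_root hm (exp_pos a).le, hexp_two_mul]
    ring_nf
end

section
/- Let α ∈ (1/2, 1) and for x ∈ ℝ set ζ(x) = (α − 1)(exp(x) + exp(−x)) and z₂(x) = (ζ(x) − sqrt(ζ(x)² − 4(1 − 2α))) / (2(1 − 2α)). Then z₂ is strictly increasing in x on (0, ∞); equivalently, the critical threshold a_crit(x) = log z₂(x) is strictly increasing in |y_G − y_R| where x = y_G − y_R. -/
/-! Since `1 - 2α < 0`, `z₂` is a negative multiple of `ζ - √(ζ² - 4(1 - 2α))`, which is strictly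
increasing in `ζ`, while `ζ = 2(α - 1) cosh x` is strictly decreasing on `(0, ∞)`. -/

open Real

lemma strictMono_sub_sqrt_sq_sub {k : ℝ} (hk : k < 0) :
    StrictMono fun t : ℝ => t - √(t ^ 2 - k) := by
  intro t s hts
  have hu := sq_sqrt (show 0 ≤ t ^ 2 - k by nlinarith)
  have hv := sq_sqrt (show 0 ≤ s ^ 2 - k by nlinarith)
  have hu₀ := sqrt_nonneg (t ^ 2 - k)
  have hv₀ := sqrt_nonneg (s ^ 2 - k)
  -- `√(t ^ 2 - k) > t`, so `√(s ^ 2 - k) + √(t ^ 2 - k) > s + t` and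
  -- `√(s ^ 2 - k) - √(t ^ 2 - k) = (s ^ 2 - t ^ 2) / (√(s ^ 2 - k) + √(t ^ 2 - k)) < s - t`.
  have ht : t < √(t ^ 2 - k) := by nlinarith
  have hs : s < √(s ^ 2 - k) := by nlinarith
  nlinarith

lemma strictMonoOn_exp_add_exp_neg : StrictMonoOn (fun x => exp x + exp (-x)) (Set.Ici 0) := by
  intro x hx y hy hxy
  have := cosh_strictMonoOn hx hy hxy
  rw [cosh_eq, cosh_eq] at this
  linarith

theorem a_crit_increasing_in_gap (α : ℝ) (hα : α ∈ Set.Ioo (1/2 : ℝ) 1) :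
    StrictMonoOn
      (fun x : ℝ =>
        ((α - 1) * (Real.exp x + Real.exp (-x)) -
          Real.sqrt (((α - 1) * (Real.exp x + Real.exp (-x)))^2 - 4 * (1 - 2*α))) /
          (2 * (1 - 2*α)))
      (Set.Ioi 0) := by
  obtain ⟨hα₁, hα₂⟩ := hα
  intro x hx y hy hxy
  have hζ : (α - 1) * (exp y + exp (-y)) < (α - 1) * (exp x + exp (-x)) :=
    mul_lt_mul_of_neg_left
      (strictMonoOn_exp_add_exp_neg (Set.Ioi_subset_Ici_self hx) (Set.Ioi_subset_Ici_self hy) hxy)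
      (by linarith)
  have hnum := strictMono_sub_sqrt_sq_sub (k := 4 * (1 - 2 * α)) (by linarith) hζ
  exact (div_lt_div_right_of_neg (by linarith)).2 hnum
end

section
/- Let x ∈ ℝ be fixed, set s = exp(x) + exp(−x), and for α ∈ (1/2, 1) define z₂(α) = ((α − 1)s − sqrt((α − 1)²s² − 4(1 − 2α))) / (2(1 − 2α)). Then z₂ is strictly decreasing in α on (1/2, 1); equivalently, the critical threshold a_crit = log z₂ is strictly decreasing in α. -/
/-!
Rationalising, `z₂ = 2 / g(α)` with `g(α) = √(w² + t) - w`, where `w = (1 - α) s ≥ 0` and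
`t = 4 (2α - 1) > 0`. The map `(w, t) ↦ √(w² + t) - w` is positive for `t > 0`, antitone in
`w` and strictly increasing in `t`; as `α` grows, `w` shrinks and `t` grows, so `g` increases
strictly and `z₂ = 2 / g` decreases strictly.
-/

open Real

lemma sub_sqrt_div_two_mul_eq_two_div_add_sqrt {b c : ℝ} (hc : c ≠ 0) (hd : 0 ≤ b ^ 2 - 4 * c) :
    (b - √(b ^ 2 - 4 * c)) / (2 * c) = 2 / (b + √(b ^ 2 - 4 * c)) := by
  set r := √(b ^ 2 - 4 * c)
  have hsq : r ^ 2 = b ^ 2 - 4 * c := sq_sqrt hd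
  have hne : b + r ≠ 0 := fun h => hc (by linear_combination (b - r) * h / 4 + hsq / 4)
  rw [div_eq_div_iff (mul_ne_zero two_ne_zero hc) hne]
  nlinarith

lemma sqrt_sq_add_sub_pos {w t : ℝ} (ht : 0 < t) : 0 < √(w ^ 2 + t) - w := by
  linarith [lt_sqrt_of_sq_lt (show w ^ 2 < w ^ 2 + t by linarith)]

lemma sqrt_sq_add_sub_lt_of_lt {w t₁ t₂ : ℝ} (h₁ : 0 ≤ w ^ 2 + t₁) (h : t₁ < t₂) :
    √(w ^ 2 + t₁) - w < √(w ^ 2 + t₂) - w := by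
  linarith [sqrt_lt_sqrt h₁ (show w ^ 2 + t₁ < w ^ 2 + t₂ by linarith)]

lemma sqrt_sq_add_sub_antitone {t : ℝ} (ht : 0 ≤ t) : Antitone fun w : ℝ => √(w ^ 2 + t) - w := by
  intro w₁ w₂ hw
  have hw₁ : w₁ ≤ √(w₁ ^ 2 + t) := le_sqrt_of_sq_le (by linarith)
  have hsq := sq_sqrt (show 0 ≤ w₁ ^ 2 + t by positivity)
  suffices √(w₂ ^ 2 + t) ≤ √(w₁ ^ 2 + t) + (w₂ - w₁) by simp only; linarith
  rw [sqrt_le_left (by linarith [sqrt_nonneg (w₁ ^ 2 + t)])]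
  nlinarith

theorem a_crit_decreasing_in_alpha (x : ℝ) :
    StrictAntiOn
      (fun α : ℝ =>
        ((α - 1) * (Real.exp x + Real.exp (-x)) -
          Real.sqrt ((α - 1)^2 * (Real.exp x + Real.exp (-x))^2 - 4 * (1 - 2*α))) /
          (2 * (1 - 2*α)))
      (Set.Ioo (1/2 : ℝ) 1) := by
  set s := exp x + exp (-x)
  have hs : 0 < s := by positivity
  set g : ℝ → ℝ := fun α => √(((1 - α) * s) ^ 2 + 4 * (2 * α - 1)) - (1 - α) * s
  have hf : ∀ α ∈ Set.Ioo (1/2 : ℝ) 1,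
      ((α - 1) * s - √((α - 1) ^ 2 * s ^ 2 - 4 * (1 - 2 * α))) / (2 * (1 - 2 * α)) = 2 / g α := by
    rintro α ⟨hα₁, -⟩
    have hd : ((α - 1) * s) ^ 2 - 4 * (1 - 2 * α) = ((1 - α) * s) ^ 2 + 4 * (2 * α - 1) := by ring
    have hd_nonneg : 0 ≤ ((α - 1) * s) ^ 2 - 4 * (1 - 2 * α) := by
      rw [hd]; linarith [sq_nonneg ((1 - α) * s)]
    rw [← mul_pow, sub_sqrt_div_two_mul_eq_two_div_add_sqrt (by linarith) hd_nonneg, hd]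
    ring
  have hg_pos : ∀ α ∈ Set.Ioo (1/2 : ℝ) 1, 0 < g α :=
    fun α hα => sqrt_sq_add_sub_pos (by linarith [hα.1])
  intro a ha b hb hab
  have hg_lt : g a < g b :=
    calc g a < √(((1 - a) * s) ^ 2 + 4 * (2 * b - 1)) - (1 - a) * s :=
          sqrt_sq_add_sub_lt_of_lt (by nlinarith [ha.1]) (by linarith)
      _ ≤ g b :=
          sqrt_sq_add_sub_antitone (by linarith [hb.1]) (by nlinarith)
  simp only [hf a ha, hf b hb]
  exact div_lt_div_of_pos_left two_pos (hg_pos a ha) hg_lt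
end

section
/- Let α ∈ (0, 1) and define g(β) = −α·log(1 − β) − α(1 − α)β/((1 − β)(1 − α − β)) for β ∈ (1 − α, 1). Then at every β ∈ (1 − α, 1) the derivative of g equals α·[(1 − β)(α + β − 1)² + (1 − α)(α + β² − 1)] / ((β − 1)²(α + β − 1)²), and this derivative is strictly positive whenever β > sqrt(1 − α). -/
/-! The derivative comes from the chain and quotient rules. Its numerator is the sum of
`(1 - β) * (α + β - 1) ^ 2 ≥ 0` and `(1 - α) * (α + β ^ 2 - 1)`, which is positive as soon as
`β ^ 2 > 1 - α`, i.e. `β > √(1 - α)`. -/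

open Real

noncomputable def stationaryPayoff (α β : ℝ) : ℝ :=
  -α * log (1 - β) - α * (1 - α) * β / ((1 - β) * (1 - α - β))

lemma hasDerivAt_stationaryPayoff {α β : ℝ} (hβ1 : β ≠ 1) (hβα : β ≠ 1 - α) :
    HasDerivAt (stationaryPayoff α)
      (α * ((1 - β) * (α + β - 1) ^ 2 + (1 - α) * (α + β ^ 2 - 1)) /
        ((β - 1) ^ 2 * (α + β - 1) ^ 2)) β := by
  have h1 : 1 - β ≠ 0 := sub_ne_zero.2 hβ1.symm
  have h2 : 1 - α - β ≠ 0 := sub_ne_zero.2 hβα.symm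
  have hlog := (((hasDerivAt_id' β).const_sub 1).log h1).const_mul (-α)
  have hfrac := ((hasDerivAt_id' β).const_mul (α * (1 - α))).fun_div
    (((hasDerivAt_id' β).const_sub 1).fun_mul ((hasDerivAt_id' β).const_sub (1 - α)))
    (mul_ne_zero h1 h2)
  refine (hlog.sub hfrac).congr_deriv ?_
  have h3 : β - 1 ≠ 0 := sub_ne_zero.2 hβ1
  have h4 : α + β - 1 ≠ 0 := fun h => h2 (by linarith)
  field_simp
  ring

lemma stationaryPayoff_deriv_numerator_pos {α β : ℝ} (hα : α < 1) (hβ : β ≤ 1)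
    (hβsq : 1 - α < β ^ 2) :
    0 < (1 - β) * (α + β - 1) ^ 2 + (1 - α) * (α + β ^ 2 - 1) := by
  have := mul_nonneg (sub_nonneg.2 hβ) (sq_nonneg (α + β - 1))
  have := mul_pos (sub_pos.2 hα) (by linarith : 0 < α + β ^ 2 - 1)
  linarith

theorem payoff_at_stationary_deriv (α : ℝ) (hα : α ∈ Set.Ioo (0 : ℝ) 1) :
    ∀ β ∈ Set.Ioo (1 - α) (1 : ℝ),
      HasDerivAt
        (fun β : ℝ =>
          -α * Real.log (1 - β) - α * (1 - α) * β / ((1 - β) * (1 - α - β)))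
        (α * ((1 - β) * (α + β - 1)^2 + (1 - α) * (α + β^2 - 1)) /
          ((β - 1)^2 * (α + β - 1)^2)) β ∧
      (β > Real.sqrt (1 - α) →
        α * ((1 - β) * (α + β - 1)^2 + (1 - α) * (α + β^2 - 1)) /
          ((β - 1)^2 * (α + β - 1)^2) > 0) := by
  obtain ⟨hα0, hα1⟩ := hα
  rintro β ⟨hαβ, hβ1⟩
  refine ⟨hasDerivAt_stationaryPayoff hβ1.ne hαβ.ne', fun hβ => ?_⟩
  have hnum := stationaryPayoff_deriv_numerator_pos hα1 hβ1.le (Real.lt_sq_of_sqrt_lt hβ)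
  have hden : 0 < (β - 1) ^ 2 * (α + β - 1) ^ 2 :=
    mul_pos (pow_two_pos_of_ne_zero (sub_ne_zero.2 hβ1.ne)) (pow_pos (by linarith) 2)
  exact div_pos (mul_pos hα0 hnum) hden
end
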